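/- The cubic Q(λ) = (a³+(a−b)²)λ³ − 3(a³+(a−b)²)λ² + 3(a−b)²λ + 4a³ − (a−b)² has discriminant equal to −108·a⁶·(a−b)²·(a³+(a−b)²); hence Q has three distinct real roots if and only if a³ + (a−b)² < 0 (assuming a ≠ 0, a ≠ b). -/

import Mathlib

/-!
The discriminant identity is a polynomial identity, and since `a⁶ (a - b)² > 0` the equivalence
is the sign criterion for real cubics. For the criterion: three distinct roots give
`discr = a⁴ ∏ (rᵢ - rⱼ)² > 0` by Vieta's formulas; conversely, a positive discriminant means that
the depressed cubic `t³ - 3m²t + q` has `|q| < 2m³`, so it changes sign on `-2m < -m < m < 2m`.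
-/

theorem exists_three_zeros_of_sign_changes {f : ℝ → ℝ} (hf : Continuous f) {x₀ x₁ x₂ x₃ : ℝ}
    (h₀₁ : x₀ ≤ x₁) (h₁₂ : x₁ ≤ x₂) (h₂₃ : x₂ ≤ x₃)
    (h₀ : f x₀ < 0) (h₁ : 0 < f x₁) (h₂ : f x₂ < 0) (h₃ : 0 < f x₃) :
    ∃ y₁ y₂ y₃, y₁ < y₂ ∧ y₂ < y₃ ∧ f y₁ = 0 ∧ f y₂ = 0 ∧ f y₃ = 0 := by
  obtain ⟨y₁, hy₁, hfy₁⟩ := intermediate_value_Ioo h₀₁ hf.continuousOn ⟨h₀, h₁⟩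
  obtain ⟨y₂, hy₂, hfy₂⟩ := intermediate_value_Ioo' h₁₂ hf.continuousOn ⟨h₂, h₁⟩
  obtain ⟨y₃, hy₃, hfy₃⟩ := intermediate_value_Ioo h₂₃ hf.continuousOn ⟨h₂, h₃⟩
  exact ⟨y₁, y₂, y₃, hy₁.2.trans hy₂.1, hy₂.2.trans hy₃.1, hfy₁, hfy₂, hfy₃⟩

theorem exists_three_roots_of_depressed_discr_neg {p q : ℝ} (h : 4 * p ^ 3 + 27 * q ^ 2 < 0) :
    ∃ t₁ t₂ t₃ : ℝ, t₁ < t₂ ∧ t₂ < t₃ ∧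
      t₁ ^ 3 + p * t₁ + q = 0 ∧ t₂ ^ 3 + p * t₂ + q = 0 ∧ t₃ ^ 3 + p * t₃ + q = 0 := by
  have hp : p < 0 := by nlinarith [sq_nonneg q, sq_nonneg p]
  obtain ⟨m, hm, rfl⟩ : ∃ m : ℝ, 0 ≤ m ∧ p = -3 * m ^ 2 :=
    ⟨√(-p / 3), Real.sqrt_nonneg _, by rw [Real.sq_sqrt (by linarith)]; ring⟩
  have hq : |q| < 2 * m ^ 3 := abs_lt_of_sq_lt_sq (by nlinarith) (by positivity)
  obtain ⟨hq₁, hq₂⟩ := abs_lt.mp hq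
  -- `t³ - 3m²t` takes the value `-2m³` at `-2m` and `m`, and `2m³` at `-m` and `2m`
  exact exists_three_zeros_of_sign_changes (f := fun t => t ^ 3 + -3 * m ^ 2 * t + q)
    (by fun_prop) (x₀ := -2 * m) (x₁ := -m) (x₂ := m) (x₃ := 2 * m)
    (by linarith) (by linarith) (by linarith)
    (by ring_nf; linarith) (by ring_nf; linarith) (by ring_nf; linarith) (by ring_nf; linarith)

namespace Cubic

theorem roots_eq_of_mem_roots {R : Type*} [CommRing R] [IsDomain R] {P : Cubic R} (ha : P.a ≠ 0)
    {x y z : R} (hxy : x ≠ y) (hxz : x ≠ z) (hyz : y ≠ z)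
    (hx : x ∈ P.roots) (hy : y ∈ P.roots) (hz : z ∈ P.roots) :
    P.roots = {x, y, z} := by
  have hnodup : ({x, y, z} : Multiset R).Nodup := by simp [hxy, hxz, hyz]
  refine (Multiset.eq_of_le_of_card_le ((Multiset.le_iff_subset hnodup).mpr ?_) ?_).symm
  · intro w hw
    simp only [Multiset.insert_eq_cons, Multiset.mem_cons, Multiset.mem_singleton] at hw
    rcases hw with rfl | rfl | rfl <;> assumption
  · calc Multiset.card P.roots ≤ P.toPoly.natDegree := Polynomial.card_roots' _
      _ = 3 := natDegree_of_a_ne_zero ha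

theorem exists_depressed {F : Type*} [Field F] (P : Cubic F) (ha : P.a ≠ 0) (h3 : (3 : F) ≠ 0) :
    ∃ s p q : F, (∀ t, P.a * (t - s) ^ 3 + P.b * (t - s) ^ 2 + P.c * (t - s) + P.d =
        P.a * (t ^ 3 + p * t + q)) ∧
      P.discr = -P.a ^ 4 * (4 * p ^ 3 + 27 * q ^ 2) := by
  obtain ⟨s, hb⟩ : ∃ s, P.b = 3 * P.a * s := ⟨P.b / (3 * P.a), by field_simp⟩
  refine ⟨s, P.c / P.a - 3 * s ^ 2, 2 * s ^ 3 - s * P.c / P.a + P.d / P.a, fun t => ?_, ?_⟩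
  · rw [hb]
    field_simp
    ring
  · rw [discr, hb]
    field_simp
    ring

theorem exists_three_distinct_roots_iff_discr_pos (P : Cubic ℝ) (ha : P.a ≠ 0) :
    (∃ x y z, x ≠ y ∧ x ≠ z ∧ y ≠ z ∧ x ∈ P.roots ∧ y ∈ P.roots ∧ z ∈ P.roots) ↔
      0 < P.discr := by
  constructor
  · rintro ⟨x, y, z, hxy, hxz, hyz, hx, hy, hz⟩
    have h3 : (map (RingHom.id ℝ) P).roots = {x, y, z} := by
      rw [map_roots, Polynomial.map_id]
      exact roots_eq_of_mem_roots ha hxy hxz hyz hx hy hz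
    have hdiscr := discr_eq_prod_three_roots ha h3
    rw [RingHom.id_apply] at hdiscr
    rw [hdiscr]
    have := sub_ne_zero.mpr hxy
    have := sub_ne_zero.mpr hxz
    have := sub_ne_zero.mpr hyz
    positivity
  · intro hpos
    obtain ⟨s, p, q, hshift, hdiscr⟩ := P.exists_depressed ha three_ne_zero
    have hneg : 4 * p ^ 3 + 27 * q ^ 2 < 0 := by
      rw [hdiscr, neg_mul, ← mul_neg] at hpos
      exact neg_pos.mp ((mul_pos_iff_of_pos_left (by positivity)).mp hpos)
    obtain ⟨t₁, t₂, t₃, h₁₂, h₂₃, ht₁, ht₂, ht₃⟩ := exists_three_roots_of_depressed_discr_neg hneg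
    have hroot {t : ℝ} (ht : t ^ 3 + p * t + q = 0) : t - s ∈ P.roots := by
      rw [mem_roots_iff (ne_zero_of_a_ne_zero ha), hshift, ht, mul_zero]
    refine ⟨t₁ - s, t₂ - s, t₃ - s, ?_, ?_, ?_, hroot ht₁, hroot ht₂, hroot ht₃⟩ <;>
      intro h <;> linarith

end Cubic

/-- The cubic `Q(λ) = (a³+(a−b)²)λ³ − 3(a³+(a−b)²)λ² + 3(a−b)²λ + 4a³ − (a−b)²` has
discriminant `−108·a⁶·(a−b)²·(a³+(a−b)²)`; hence (for `a ≠ 0`, `a ≠ b`,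
`a³+(a−b)² ≠ 0`) it has three distinct real roots iff `a³ + (a−b)² < 0`. -/
theorem type2_plus_fold_cubic_discriminant (a b : ℝ) (ha : a ≠ 0) (hab : a ≠ b)
    (hK : a ^ 3 + (a - b) ^ 2 ≠ 0)
    (Q : ℝ → ℝ)
    (hQ : ∀ lam, Q lam = (a ^ 3 + (a - b) ^ 2) * lam ^ 3 -
      3 * (a ^ 3 + (a - b) ^ 2) * lam ^ 2 + 3 * (a - b) ^ 2 * lam +
      4 * a ^ 3 - (a - b) ^ 2) :
    (18 * (a ^ 3 + (a - b) ^ 2) * (-3 * (a ^ 3 + (a - b) ^ 2)) * (3 * (a - b) ^ 2) *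
          (4 * a ^ 3 - (a - b) ^ 2) -
        4 * (-3 * (a ^ 3 + (a - b) ^ 2)) ^ 3 * (4 * a ^ 3 - (a - b) ^ 2) +
        (-3 * (a ^ 3 + (a - b) ^ 2)) ^ 2 * (3 * (a - b) ^ 2) ^ 2 -
        4 * (a ^ 3 + (a - b) ^ 2) * (3 * (a - b) ^ 2) ^ 3 -
        27 * (a ^ 3 + (a - b) ^ 2) ^ 2 * (4 * a ^ 3 - (a - b) ^ 2) ^ 2 =
      -108 * a ^ 6 * (a - b) ^ 2 * (a ^ 3 + (a - b) ^ 2)) ∧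
    ((∃ r₁ r₂ r₃ : ℝ, r₁ ≠ r₂ ∧ r₁ ≠ r₃ ∧ r₂ ≠ r₃ ∧
        Q r₁ = 0 ∧ Q r₂ = 0 ∧ Q r₃ = 0) ↔ a ^ 3 + (a - b) ^ 2 < 0) := by
  set P : Cubic ℝ := ⟨a ^ 3 + (a - b) ^ 2, -3 * (a ^ 3 + (a - b) ^ 2), 3 * (a - b) ^ 2,
    4 * a ^ 3 - (a - b) ^ 2⟩
  have hdiscr : P.discr = -108 * a ^ 6 * (a - b) ^ 2 * (a ^ 3 + (a - b) ^ 2) := by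
    simp only [Cubic.discr, P]
    ring
  have hroots (r : ℝ) : Q r = 0 ↔ r ∈ P.roots := by
    rw [Cubic.mem_roots_iff (Cubic.ne_zero_of_a_ne_zero hK), hQ]
    simp only [P]
    ring_nf
  have hscale : 0 < 108 * a ^ 6 * (a - b) ^ 2 := by
    have := sub_ne_zero.mpr hab
    positivity
  refine ⟨by ring, ?_⟩
  simp only [hroots]
  rw [P.exists_three_distinct_roots_iff_discr_pos hK, hdiscr,
    show -108 * a ^ 6 * (a - b) ^ 2 * (a ^ 3 + (a - b) ^ 2) =
      108 * a ^ 6 * (a - b) ^ 2 * -(a ^ 3 + (a - b) ^ 2) by ring,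
    mul_pos_iff_of_pos_left hscale, neg_pos]
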